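/- arXiv:2209.03808 — 2 statements merged into one kernel-verified Lean document; each statement's English description precedes it below -/
import Mathlib

section
/- Let M = [[A, B], [C, D]] be an invertible block matrix with A invertible, ‖B‖ ≤ 1 and ‖C‖ ≤ 1 (operator norms), and let S = D - C A^{-1} B. Then ‖S^{-1}‖ ≤ ‖M^{-1}‖ < 4(1 + ‖A^{-1}‖)²(1 + ‖S^{-1}‖). -/
/-!
The `(2,2)` block of `M⁻¹` is `S⁻¹` by the Schur complement formula, and a block of a matrix
is obtained by composing it with coordinate embeddings and projections, which have operator
norm at most `1`; this gives the lower bound. For the upper bound, the norm of a block matrix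
is at most the sum of the norms of its blocks, and each block of `M⁻¹` is bounded using
`‖B‖, ‖C‖ ≤ 1`.
-/

open Matrix
open scoped Matrix.Norms.L2Operator

namespace Matrix

section Algebra

variable {α : Type*} {l m n o : Type*}

lemma submatrix_eq_one_submatrix_mul_mul [NonAssocSemiring α] [Fintype m] [Fintype n]
    [DecidableEq m] [DecidableEq n] (N : Matrix m n α) (e : l → m) (f : o → n) :
    N.submatrix e f =
      (1 : Matrix m m α).submatrix e id * N * (1 : Matrix n n α).submatrix id f := by
  ext i j
  simp [mul_apply, one_apply]

lemma fromBlocks_eq_sum_one_submatrix_mul_mul [NonAssocSemiring α] [Fintype l] [Fintype m]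
    [Fintype n] [Fintype o] [DecidableEq l] [DecidableEq m] [DecidableEq n] [DecidableEq o]
    (A : Matrix n l α) (B : Matrix n m α) (C : Matrix o l α) (D : Matrix o m α) :
    fromBlocks A B C D =
      (1 : Matrix (n ⊕ o) (n ⊕ o) α).submatrix id Sum.inl * A *
          (1 : Matrix (l ⊕ m) (l ⊕ m) α).submatrix Sum.inl id +
        (1 : Matrix (n ⊕ o) (n ⊕ o) α).submatrix id Sum.inl * B *
          (1 : Matrix (l ⊕ m) (l ⊕ m) α).submatrix Sum.inr id +
        (1 : Matrix (n ⊕ o) (n ⊕ o) α).submatrix id Sum.inr * C *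
          (1 : Matrix (l ⊕ m) (l ⊕ m) α).submatrix Sum.inl id +
        (1 : Matrix (n ⊕ o) (n ⊕ o) α).submatrix id Sum.inr * D *
          (1 : Matrix (l ⊕ m) (l ⊕ m) α).submatrix Sum.inr id := by
  ext (i | i) (j | j) <;> simp [mul_apply, one_apply]

lemma inv_fromBlocks₁₁_eq [CommRing α] [Fintype m] [Fintype n] [DecidableEq m] [DecidableEq n]
    {A : Matrix m m α} (B : Matrix m n α) (C : Matrix n m α) (D : Matrix n n α)
    (hA : IsUnit A) (hM : IsUnit (fromBlocks A B C D)) :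
    (fromBlocks A B C D)⁻¹ =
      fromBlocks (A⁻¹ + A⁻¹ * B * (D - C * A⁻¹ * B)⁻¹ * C * A⁻¹)
        (-(A⁻¹ * B * (D - C * A⁻¹ * B)⁻¹)) (-((D - C * A⁻¹ * B)⁻¹ * C * A⁻¹))
        (D - C * A⁻¹ * B)⁻¹ := by
  let _ := hA.invertible
  let _ := hM.invertible
  let _ := invertibleOfFromBlocks₁₁Invertible A B C D
  simpa only [invOf_eq_nonsing_inv] using invOf_fromBlocks₁₁_eq A B C D

end Algebra

variable {𝕜 : Type*} [RCLike 𝕜] {l m n o : Type*}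

lemma l2_opNorm_one_le [Fintype n] [DecidableEq n] : ‖(1 : Matrix n n 𝕜)‖ ≤ 1 := by
  rw [cstar_norm_def, map_one]
  exact ContinuousLinearMap.norm_id_le

lemma l2_opNorm_one_submatrix_id_le [Fintype m] [Fintype n] [DecidableEq m] [DecidableEq n]
    {e : n → m} (he : e.Injective) : ‖(1 : Matrix m m 𝕜).submatrix id e‖ ≤ 1 := by
  set ι := (1 : Matrix m m 𝕜).submatrix id e
  have hisometry : ιᴴ * ι = 1 := by
    ext i j
    simp [ι, mul_apply, one_apply, he.eq_iff, eq_comm]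
  have hsq := l2_opNorm_conjTranspose_mul_self ι
  rw [hisometry] at hsq
  nlinarith [l2_opNorm_one_le (𝕜 := 𝕜) (n := n), norm_nonneg ι]

lemma l2_opNorm_one_submatrix_le_id [Fintype m] [Fintype n] [DecidableEq m] [DecidableEq n]
    {e : n → m} (he : e.Injective) : ‖(1 : Matrix m m 𝕜).submatrix e id‖ ≤ 1 := by
  rw [← l2_opNorm_conjTranspose, conjTranspose_submatrix, conjTranspose_one]
  exact l2_opNorm_one_submatrix_id_le he

variable [Fintype l] [Fintype m] [Fintype n] [Fintype o]

lemma l2_opNorm_mul_mul_le_of_norm_outer_le_one [DecidableEq m] [DecidableEq n] [DecidableEq o]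
    {u : Matrix l m 𝕜} {v : Matrix n o 𝕜} (hu : ‖u‖ ≤ 1) (hv : ‖v‖ ≤ 1) (P : Matrix m n 𝕜) :
    ‖u * P * v‖ ≤ ‖P‖ :=
  calc ‖u * P * v‖ ≤ ‖u‖ * ‖P‖ * ‖v‖ :=
        (l2_opNorm_mul _ _).trans (by gcongr; exact l2_opNorm_mul _ _)
    _ ≤ 1 * ‖P‖ * 1 := by gcongr
    _ = ‖P‖ := by ring

lemma l2_opNorm_mul_mul_le_of_norm_middle_le_one [DecidableEq m] [DecidableEq n] [DecidableEq o]
    (P : Matrix l m 𝕜) {Q : Matrix m n 𝕜} (R : Matrix n o 𝕜) (hQ : ‖Q‖ ≤ 1) :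
    ‖P * Q * R‖ ≤ ‖P‖ * ‖R‖ :=
  calc ‖P * Q * R‖ ≤ ‖P‖ * ‖Q‖ * ‖R‖ :=
        (l2_opNorm_mul _ _).trans (by gcongr; exact l2_opNorm_mul _ _)
    _ ≤ ‖P‖ * 1 * ‖R‖ := by gcongr
    _ = ‖P‖ * ‖R‖ := by ring

lemma l2_opNorm_submatrix_le [DecidableEq n] [DecidableEq o] (N : Matrix m n 𝕜) {e : l → m}
    {f : o → n} (he : e.Injective) (hf : f.Injective) : ‖N.submatrix e f‖ ≤ ‖N‖ := by
  classical
  rw [submatrix_eq_one_submatrix_mul_mul]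
  exact l2_opNorm_mul_mul_le_of_norm_outer_le_one (l2_opNorm_one_submatrix_le_id he)
    (l2_opNorm_one_submatrix_id_le hf) N

lemma l2_opNorm_toBlocks₂₂_le [DecidableEq l] [DecidableEq m] (N : Matrix (n ⊕ o) (l ⊕ m) 𝕜) :
    ‖N.toBlocks₂₂‖ ≤ ‖N‖ :=
  l2_opNorm_submatrix_le N Sum.inr_injective Sum.inr_injective

lemma l2_opNorm_fromBlocks_le [DecidableEq l] [DecidableEq m]
    (A : Matrix n l 𝕜) (B : Matrix n m 𝕜) (C : Matrix o l 𝕜) (D : Matrix o m 𝕜) :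
    ‖fromBlocks A B C D‖ ≤ ‖A‖ + ‖B‖ + ‖C‖ + ‖D‖ := by
  classical
  have hι₁ := l2_opNorm_one_submatrix_id_le (𝕜 := 𝕜) (Sum.inl_injective (α := n) (β := o))
  have hι₂ := l2_opNorm_one_submatrix_id_le (𝕜 := 𝕜) (Sum.inr_injective (α := n) (β := o))
  have hπ₁ := l2_opNorm_one_submatrix_le_id (𝕜 := 𝕜) (Sum.inl_injective (α := l) (β := m))
  have hπ₂ := l2_opNorm_one_submatrix_le_id (𝕜 := 𝕜) (Sum.inr_injective (α := l) (β := m))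
  rw [fromBlocks_eq_sum_one_submatrix_mul_mul]
  refine norm_add₄_le.trans ?_
  gcongr
  exacts [l2_opNorm_mul_mul_le_of_norm_outer_le_one hι₁ hπ₁ A,
    l2_opNorm_mul_mul_le_of_norm_outer_le_one hι₁ hπ₂ B,
    l2_opNorm_mul_mul_le_of_norm_outer_le_one hι₂ hπ₁ C,
    l2_opNorm_mul_mul_le_of_norm_outer_le_one hι₂ hπ₂ D]

end Matrix

/-- Norm estimate from the Schur complement lemma: if `M = [[A,B],[C,D]]` is an
invertible block matrix with `A` invertible, `‖B‖ ≤ 1` and `‖C‖ ≤ 1` (ℓ²-operator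
norms), and `S = D - C A⁻¹ B`, then `‖S⁻¹‖ ≤ ‖M⁻¹‖ < 4 (1 + ‖A⁻¹‖)² (1 + ‖S⁻¹‖)`. -/
theorem schur_complement_inverse_norm
    {d1 d2 : Type*} [Fintype d1] [Fintype d2] [DecidableEq d1] [DecidableEq d2]
    (A : Matrix d1 d1 ℂ) (B : Matrix d1 d2 ℂ) (C : Matrix d2 d1 ℂ) (D : Matrix d2 d2 ℂ)
    (hA : IsUnit A) (hM : IsUnit (Matrix.fromBlocks A B C D))
    (hB : ‖B‖ ≤ 1) (hC : ‖C‖ ≤ 1) :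
    ‖(D - C * A⁻¹ * B)⁻¹‖ ≤ ‖(Matrix.fromBlocks A B C D)⁻¹‖ ∧
      ‖(Matrix.fromBlocks A B C D)⁻¹‖ <
        4 * (1 + ‖A⁻¹‖) ^ 2 * (1 + ‖(D - C * A⁻¹ * B)⁻¹‖) := by
  have hinv := inv_fromBlocks₁₁_eq B C D hA hM
  set S := D - C * A⁻¹ * B
  refine ⟨?_, ?_⟩
  · calc ‖S⁻¹‖ = ‖(fromBlocks A B C D)⁻¹.toBlocks₂₂‖ := by rw [hinv, toBlocks_fromBlocks₂₂]
      _ ≤ ‖(fromBlocks A B C D)⁻¹‖ := l2_opNorm_toBlocks₂₂_le _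
  · have hX : ‖A⁻¹ * B * S⁻¹‖ ≤ ‖A⁻¹‖ * ‖S⁻¹‖ :=
      l2_opNorm_mul_mul_le_of_norm_middle_le_one _ _ hB
    have hY : ‖S⁻¹ * C * A⁻¹‖ ≤ ‖S⁻¹‖ * ‖A⁻¹‖ :=
      l2_opNorm_mul_mul_le_of_norm_middle_le_one _ _ hC
    have hW : ‖A⁻¹ * B * S⁻¹ * C * A⁻¹‖ ≤ ‖A⁻¹‖ * ‖S⁻¹‖ * ‖A⁻¹‖ :=
      (l2_opNorm_mul_mul_le_of_norm_middle_le_one _ _ hC).trans (by gcongr)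
    set a := ‖A⁻¹‖
    set s := ‖S⁻¹‖
    have ha : 0 ≤ a := norm_nonneg _
    have hs : 0 ≤ s := norm_nonneg _
    calc ‖(fromBlocks A B C D)⁻¹‖
        ≤ (a + ‖A⁻¹ * B * S⁻¹ * C * A⁻¹‖) + ‖A⁻¹ * B * S⁻¹‖ + ‖S⁻¹ * C * A⁻¹‖ + s := by
          rw [hinv, ← norm_neg (A⁻¹ * B * S⁻¹), ← norm_neg (S⁻¹ * C * A⁻¹)]
          exact (l2_opNorm_fromBlocks_le _ _ _ _).trans (by gcongr; exact norm_add_le _ _)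
      _ ≤ (a + a * s * a) + a * s + s * a + s := by gcongr
      _ < 4 * (1 + a) ^ 2 * (1 + s) := by
          nlinarith [mul_nonneg ha hs, mul_nonneg (mul_nonneg ha hs) ha, mul_nonneg ha ha]
end

section
/- Let Λ ⊂ ℤ^d be finite, D the diagonal matrix on ℓ²(Λ) with entries D_n, and Δ_Λ the adjacency matrix Δ(n,n') = δ_{‖n-n'‖₁,1} restricted to Λ. Suppose |D_n| ≥ δ > 0 for all n ∈ Λ and 2dε/δ < 1/2. Then for x, y ∈ Λ with ‖x-y‖₁ > 0, the inverse T^{-1} of T = D + εΔ_Λ satisfies the off-diagonal bound |T^{-1}(x,y)| ≤ 2δ^{-1}(2dεδ^{-1})^{‖x-y‖₁}. -/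
/-!
Factor `T = D (1 - C)` with `C = -ε D⁻¹ Δ_Λ`. The matrix `C` only couples points at ℓ¹-distance
one, so `(Cⁱ)(x, y) = 0` for `i < m := ‖x - y‖₁`, and the identity
`(1 - C)⁻¹ = ∑_{i<m} Cⁱ + Cᵐ (1 - C)⁻¹` leaves only the remainder at `(x, y)`. Every lattice point
has at most `2d` neighbours, so in the ℓ^∞ operator norm `‖C‖ ≤ r := 2dε/δ < 1/2`, and the Neumann
series gives `‖Cᵐ (1 - C)⁻¹‖ ≤ rᵐ / (1 - r) ≤ 2 rᵐ`.
-/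

open Matrix Finset

attribute [local instance] Matrix.linftyOpSeminormedAddCommGroup
  Matrix.linftyOpNormedAddCommGroup Matrix.linftyOpNormedRing Matrix.linftyOpNormedSpace

namespace Matrix

variable {m n α : Type*} [Fintype m] [Fintype n]

theorem norm_apply_le_linfty_opNorm [SeminormedAddCommGroup α] (A : Matrix m n α) (i : m)
    (j : n) : ‖A i j‖ ≤ ‖A‖ := by
  suffices ‖A i j‖₊ ≤ ‖A‖₊ from this
  rw [linfty_opNNNorm_def]
  exact (single_le_sum (fun _ _ => zero_le) (mem_univ j)).trans
    (le_sup (f := fun i => ∑ k, ‖A i k‖₊) (mem_univ i))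

theorem linfty_opNorm_le_of_sum_le [SeminormedAddCommGroup α] {A : Matrix m n α} {r : ℝ}
    (hr : 0 ≤ r) (h : ∀ i, ∑ j, ‖A i j‖ ≤ r) : ‖A‖ ≤ r := by
  rw [linfty_opNorm_def, ← NNReal.coe_mk r hr, NNReal.coe_le_coe]
  refine Finset.sup_le fun i _ => ?_
  rw [← NNReal.coe_le_coe]
  push_cast
  exact h i

theorem pow_apply_eq_zero_of_lt [DecidableEq n] [Semiring α] {ρ : n → n → ℕ}
    (hρ : ∀ a, ρ a a = 0) (htri : ∀ a b c, ρ a c ≤ ρ a b + ρ b c) {C : Matrix n n α}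
    (hC : ∀ a b, 1 < ρ a b → C a b = 0) (i : ℕ) {a b : n} (hab : i < ρ a b) :
    (C ^ i) a b = 0 := by
  induction i generalizing a with
  | zero => exact one_apply_ne fun h => by simp [h, hρ] at hab
  | succ i ih =>
    rw [pow_succ', mul_apply]
    refine sum_eq_zero fun z _ => ?_
    rcases le_or_gt (ρ a z) 1 with hz | hz
    · rw [ih (by linarith [htri a z b]), mul_zero]
    · rw [hC a z hz, zero_mul]

theorem inv_one_sub_eq_geom_sum_add [DecidableEq n] [CommRing α] {C : Matrix n n α}
    (hC : IsUnit (1 - C)) (k : ℕ) : (1 - C)⁻¹ = ∑ i ∈ range k, C ^ i + C ^ k * (1 - C)⁻¹ := by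
  have h := congrArg (· * (1 - C)⁻¹) (geom_sum_mul_neg C k)
  simp only [Matrix.mul_assoc, mul_nonsing_inv _ ((isUnit_iff_isUnit_det _).1 hC),
    Matrix.mul_one, Matrix.sub_mul, Matrix.one_mul] at h
  rw [h, sub_add_cancel]

theorem inv_diagonal_add [DecidableEq n] {K : Type*} [Field K] {v : n → K} (hv : ∀ i, v i ≠ 0)
    (B : Matrix n n K) : (diagonal v + B)⁻¹ = (1 + diagonal v⁻¹ * B)⁻¹ * diagonal v⁻¹ := by
  have hvv : diagonal v * diagonal v⁻¹ = 1 := by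
    rw [diagonal_mul_diagonal, ← diagonal_one]
    exact congrArg diagonal (funext fun i => mul_inv_cancel₀ (hv i))
  have hfac : diagonal v + B = diagonal v * (1 + diagonal v⁻¹ * B) := by
    rw [Matrix.mul_add, Matrix.mul_one, ← Matrix.mul_assoc, hvv, Matrix.one_mul]
  rw [hfac, mul_inv_rev, inv_eq_right_inv hvv]

section Neumann

variable [DecidableEq n] {𝕜 : Type*} [RCLike 𝕜]

theorem linfty_opNorm_inv_one_sub_le [Nonempty n] {C : Matrix n n 𝕜} (hC : ‖C‖ < 1) :
    ‖(1 - C)⁻¹‖ ≤ (1 - ‖C‖)⁻¹ := by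
  rw [inv_eq_right_inv (mul_neg_geom_series C hC)]
  simpa using tsum_geometric_le_of_norm_lt_one C hC

theorem norm_inv_one_sub_apply_le {C : Matrix n n 𝕜} {r : ℝ} (hC : ‖C‖ ≤ r) (hr : r < 1)
    {x y : n} {k : ℕ} (hk : ∀ i < k, (C ^ i) x y = 0) :
    ‖(1 - C)⁻¹ x y‖ ≤ r ^ k * (1 - r)⁻¹ := by
  have : Nonempty n := ⟨x⟩
  have hC1 : ‖C‖ < 1 := hC.trans_lt hr
  rw [inv_one_sub_eq_geom_sum_add (isUnit_one_sub_of_norm_lt_one hC1) k, add_apply, sum_apply,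
    sum_eq_zero fun i hi => hk i (mem_range.1 hi), zero_add]
  calc ‖(C ^ k * (1 - C)⁻¹) x y‖ ≤ ‖C ^ k * (1 - C)⁻¹‖ := norm_apply_le_linfty_opNorm _ x y
    _ ≤ ‖C‖ ^ k * (1 - ‖C‖)⁻¹ := (norm_mul_le _ _).trans <|
        mul_le_mul (norm_pow_le _ _) (linfty_opNorm_inv_one_sub_le hC1) (norm_nonneg _)
          (by positivity)
    _ ≤ r ^ k * (1 - r)⁻¹ := by
      have hr0 : 0 ≤ r := (norm_nonneg C).trans hC
      gcongr

theorem norm_inv_diagonal_add_apply_le {ρ : n → n → ℕ} (hρ : ∀ a, ρ a a = 0)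
    (htri : ∀ a b c, ρ a c ≤ ρ a b + ρ b c) {v : n → 𝕜} {B : Matrix n n 𝕜}
    (hB : ∀ a b, 1 < ρ a b → B a b = 0) {δ β : ℝ} (hδ : 0 < δ) (hv : ∀ i, δ ≤ ‖v i‖)
    (hBβ : ‖B‖ ≤ β) (hβδ : β < δ) (x y : n) :
    ‖(diagonal v + B)⁻¹ x y‖ ≤ (1 - β / δ)⁻¹ * δ⁻¹ * (β / δ) ^ ρ x y := by
  have hv0 : ∀ i, v i ≠ 0 := fun i h => by
    have := hv i
    rw [h, norm_zero] at this
    linarith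
  have hvinv : ‖v⁻¹‖ ≤ δ⁻¹ := (pi_norm_le_iff_of_nonneg (by positivity)).2 fun i => by
    rw [Pi.inv_apply, norm_inv]
    exact inv_anti₀ hδ (hv i)
  set C := -(diagonal v⁻¹ * B)
  have hC : ‖C‖ ≤ β / δ := by
    rw [norm_neg, div_eq_inv_mul]
    refine (linfty_opNorm_mul _ _).trans (mul_le_mul ?_ hBβ (norm_nonneg _) (by positivity))
    rwa [linfty_opNorm_diagonal]
  have hband : ∀ i < ρ x y, (C ^ i) x y = 0 := fun i =>
    pow_apply_eq_zero_of_lt hρ htri (fun a b hab => by simp [C, hB a b hab]) i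
  have hr : β / δ < 1 := (div_lt_one hδ).2 hβδ
  have hr0 : 0 ≤ β / δ := div_nonneg ((norm_nonneg B).trans hBβ) hδ.le
  rw [inv_diagonal_add hv0, ← sub_neg_eq_add (1 : Matrix n n 𝕜), mul_diagonal, norm_mul]
  calc ‖(1 - C)⁻¹ x y‖ * ‖v⁻¹ y‖ ≤ (β / δ) ^ ρ x y * (1 - β / δ)⁻¹ * δ⁻¹ :=
        mul_le_mul (norm_inv_one_sub_apply_le hC hr hband) ((norm_le_pi_norm _ y).trans hvinv)
          (norm_nonneg _) (mul_nonneg (pow_nonneg hr0 _) (inv_nonneg.2 (sub_nonneg.2 hr.le)))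
    _ = (1 - β / δ)⁻¹ * δ⁻¹ * (β / δ) ^ ρ x y := by ring

end Neumann

end Matrix

def l1Dist {d : ℕ} (a b : Fin d → ℤ) : ℕ := ∑ i, (a i - b i).natAbs

section Lattice

variable {d : ℕ}

@[simp]
theorem l1Dist_self (a : Fin d → ℤ) : l1Dist a a = 0 := by
  simp [l1Dist]

theorem l1Dist_triangle (a b c : Fin d → ℤ) : l1Dist a c ≤ l1Dist a b + l1Dist b c := by
  rw [l1Dist, l1Dist, l1Dist, ← sum_add_distrib]
  refine sum_le_sum fun i _ => ?_
  rw [← sub_add_sub_cancel (a i) (b i) (c i)]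
  exact Int.natAbs_add_le _ _

theorem exists_eq_add_single_of_l1Dist_eq_one {a b : Fin d → ℤ} (h : l1Dist a b = 1) :
    ∃ i, (b i - a i).natAbs = 1 ∧ b = a + Pi.single i (b i - a i) := by
  rw [l1Dist] at h
  obtain ⟨i, -, hi⟩ := exists_ne_zero_of_sum_ne_zero (h.trans_ne one_ne_zero)
  have hsplit := add_sum_erase univ (fun j => (a j - b j).natAbs) (mem_univ i)
  have hrest : ∑ j ∈ univ.erase i, (a j - b j).natAbs = 0 := by omega
  refine ⟨i, by rw [← Int.natAbs_neg, neg_sub]; omega, funext fun j => ?_⟩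
  rcases eq_or_ne j i with rfl | hj
  · simp
  · have := (sum_eq_zero_iff.1 hrest) j (mem_erase.2 ⟨hj, mem_univ j⟩)
    rw [Pi.add_apply, Pi.single_eq_of_ne hj, add_zero]
    omega

theorem card_filter_l1Dist_eq_one_le (a : Fin d → ℤ) (s : Finset (Fin d → ℤ)) :
    #{b ∈ s | l1Dist a b = 1} ≤ 2 * d := by
  calc #{b ∈ s | l1Dist a b = 1}
      ≤ #((univ ×ˢ {1, -1}).image fun p : Fin d × ℤ => a + Pi.single p.1 p.2) := by
        refine card_le_card fun b hb => ?_
        obtain ⟨i, hi, hb⟩ := exists_eq_add_single_of_l1Dist_eq_one (mem_filter.1 hb).2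
        simp only [mem_image, mem_product, mem_univ, mem_insert, mem_singleton, true_and]
        exact ⟨(i, b i - a i), Int.natAbs_eq_iff.1 hi, hb.symm⟩
    _ ≤ #(univ ×ˢ ({1, -1} : Finset ℤ) : Finset (Fin d × ℤ)) := card_image_le
    _ = 2 * d := by simp [mul_comm]

def latticeAdjacency (R : Type*) [Zero R] [One R] (Λ : Finset (Fin d → ℤ)) : Matrix Λ Λ R :=
  of fun a b => if l1Dist a.1 b.1 = 1 then 1 else 0

theorem linfty_opNorm_latticeAdjacency_le (R : Type*) [SeminormedRing R] [NormOneClass R]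
    (Λ : Finset (Fin d → ℤ)) : ‖latticeAdjacency R Λ‖ ≤ 2 * d := by
  refine Matrix.linfty_opNorm_le_of_sum_le (by positivity) fun a => ?_
  calc ∑ b, ‖latticeAdjacency R Λ a b‖ = #{b ∈ Λ | l1Dist a.1 b = 1} := by
        simp only [latticeAdjacency, of_apply, apply_ite norm, norm_one, norm_zero]
        rw [sum_coe_sort Λ (fun b => if l1Dist a.1 b = 1 then (1 : ℝ) else 0), sum_boole]
    _ ≤ 2 * d := by exact_mod_cast card_filter_l1Dist_eq_one_le a.1 Λ

end Lattice

/-- Off-diagonal decay via Neumann series: on a finite set `Λ ⊂ ℤ^d`, let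
`T = D + ε Δ_Λ` with `D` diagonal, `|D_n| ≥ δ > 0`, `Δ_Λ` the ℓ¹-nearest-neighbor
adjacency matrix, and `2dε/δ < 1/2`. Then for `x ≠ y`,
`|T⁻¹(x,y)| ≤ 2 δ⁻¹ (2dε δ⁻¹)^{‖x-y‖₁}`. -/
theorem neumann_offdiagonal_decay
    {d : ℕ} (Λ : Finset (Fin d → ℤ)) (Dv : (Fin d → ℤ) → ℂ) (δ ε : ℝ)
    (hδ : 0 < δ) (hD : ∀ n ∈ Λ, δ ≤ ‖Dv n‖)
    (hε : 0 < ε) (hsmall : 2 * d * ε / δ < 1 / 2) :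
    ∀ x y : {n // n ∈ Λ},
      0 < ∑ i, ((x : Fin d → ℤ) i - (y : Fin d → ℤ) i).natAbs →
      ‖
          (((Matrix.diagonal (fun n : {n // n ∈ Λ} => Dv n) +
              (ε : ℂ) • Matrix.of (fun n n' : {n // n ∈ Λ} =>
                if (∑ i, ((n : Fin d → ℤ) i - (n' : Fin d → ℤ) i).natAbs) = 1
                then (1 : ℂ) else 0))⁻¹) x y)‖ ≤
        2 * δ⁻¹ * (2 * d * ε * δ⁻¹) ^
          (∑ i, ((x : Fin d → ℤ) i - (y : Fin d → ℤ) i).natAbs) := by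
  intro x y _
  have hβδ : 2 * d * ε < δ := by linarith [(div_lt_iff₀ hδ).1 hsmall]
  have hadj : ‖(ε : ℂ) • latticeAdjacency ℂ Λ‖ ≤ 2 * d * ε := by
    rw [norm_smul, Complex.norm_real, Real.norm_of_nonneg hε.le, mul_comm]
    gcongr
    exact linfty_opNorm_latticeAdjacency_le ℂ Λ
  rw [← div_eq_mul_inv (2 * d * ε : ℝ)]
  change _ ≤ 2 * δ⁻¹ * _ ^ l1Dist x.1 y.1
  refine (norm_inv_diagonal_add_apply_le (ρ := fun a b : Λ => l1Dist a.1 b.1)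
    (fun a => l1Dist_self a.1) (fun a b c => l1Dist_triangle a.1 b.1 c.1)
    (fun a b hab => by simp [latticeAdjacency, hab.ne']) hδ (fun n => hD n n.2) hadj hβδ
    x y).trans ?_
  gcongr
  rw [inv_le_comm₀ (by linarith) two_pos]
  linarith
end
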